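/- Let A be an O-superalgebra with a superunit and P a finitely generated A-supermodule. Then the following are equivalent: (i) P is a projective A-supermodule; (ii) the underlying |A|-module |P| is projective; (iii) the even part P₀ is a projective A₀-module; (iv) P is isomorphic (as supermodule) to the supermodule induced from a projective A₀-module. -/

import Mathlib

/-- A superalgebra structure on an `O`-algebra `A`: since `2` is invertible in all our base
rings, a `ℤ/2`-grading is the same datum as an `O`-algebra involution `σ` (even part the fixed
points, odd part the anti-fixed points). -/
structure SuperAlg (O : Type) [CommRing O] (A : Type) [Ring A] [Algebra O A] where
  σ : A ≃ₐ[O] A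
  invol : ∀ a, σ (σ a) = a

namespace SuperAlg

variable {O : Type} [CommRing O] {A : Type} [Ring A] [Algebra O A]

/-- An element is even if it is fixed by the sign automorphism. -/
def IsEven (sA : SuperAlg O A) (a : A) : Prop := sA.σ a = a

/-- An element is odd if it is negated by the sign automorphism. -/
def IsOdd (sA : SuperAlg O A) (a : A) : Prop := sA.σ a = -a

/-- The even part `A₀` of a superalgebra, as a subalgebra. -/
def evenPart (sA : SuperAlg O A) : Subalgebra O A where
  carrier := {a | sA.σ a = a}
  add_mem' := by intro a b ha hb; simp only [Set.mem_setOf_eq] at *; rw [map_add, ha, hb]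
  mul_mem' := by intro a b ha hb; simp only [Set.mem_setOf_eq] at *; rw [map_mul, ha, hb]
  algebraMap_mem' := by intro r; simp

/-- A superunit: an invertible odd element. -/
def IsSuperUnit (sA : SuperAlg O A) (u : A) : Prop := IsUnit u ∧ sA.σ u = -u

end SuperAlg

/-- A supermodule structure on a module `M` over a superalgebra `(A, σ)`: an `O`-linear
involution compatible with the sign automorphism of `A`. -/
structure SuperMod {O : Type} [CommRing O] {A : Type} [Ring A] [Algebra O A]
    (sA : SuperAlg O A) (M : Type) [AddCommGroup M] [Module O M] [Module A M]
    [IsScalarTower O A M] where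
  σ : M ≃ₗ[O] M
  invol : ∀ m, σ (σ m) = m
  compat : ∀ (a : A) (m : M), σ (a • m) = sA.σ a • σ m

namespace SuperMod

variable {O : Type} [CommRing O] {A : Type} [Ring A] [Algebra O A] {sA : SuperAlg O A}
variable {M : Type} [AddCommGroup M] [Module O M] [Module A M] [IsScalarTower O A M]

/-- The even part `M₀` of a supermodule, as a module over the even part `A₀`. -/
def evenSub (sM : SuperMod sA M) : Submodule ↥sA.evenPart M where
  carrier := {m | sM.σ m = m}
  add_mem' := by intro a b ha hb; simp only [Set.mem_setOf_eq] at *; rw [map_add, ha, hb]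
  zero_mem' := by simp
  smul_mem' := by
    intro c m hm
    simp only [Set.mem_setOf_eq] at *
    have : (c : A) • m = c • m := rfl
    rw [← this, sM.compat, c.2, hm]

end SuperMod

/-- A module is indecomposable: nonzero, and not the direct sum of two nonzero submodules. -/
def ModIndecomposable (R : Type) [Ring R] (M : Type) [AddCommGroup M] [Module R M] : Prop :=
  (∃ m : M, m ≠ 0) ∧
  ∀ p q : Submodule R M, IsCompl p q → p = ⊥ ∨ q = ⊥

section Projectivity

variable {O : Type} [CommRing O] {A : Type} [Ring A] [Algebra O A]

/-- A supermodule `P` is projective (in the category of supermodules and even homomorphisms)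
if every even `A`-linear map from `P` to a quotient lifts along any even surjection. -/
def IsProjSuperMod (sA : SuperAlg O A) {P : Type} [AddCommGroup P] [Module O P] [Module A P]
    [IsScalarTower O A P] (sP : SuperMod sA P) : Prop :=
  ∀ (M : Type) [AddCommGroup M] [Module O M] [Module A M] [IsScalarTower O A M]
    (sM : SuperMod sA M)
    (N : Type) [AddCommGroup N] [Module O N] [Module A N] [IsScalarTower O A N]
    (sN : SuperMod sA N)
    (f : M →ₗ[A] N), Function.Surjective f → (∀ m, f (sM.σ m) = sN.σ (f m)) →
    ∀ g : P →ₗ[A] N, (∀ x, g (sP.σ x) = sN.σ (g x)) →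
    ∃ h : P →ₗ[A] M, (∀ x, h (sP.σ x) = sM.σ (h x)) ∧ ∀ x, f (h x) = g x

open TensorProduct in
/-- The balancing relations defining `Ind_{A₀}^{A} Q = A ⊗_{A₀} Q` inside `A ⊗_O Q`, for an
`A₀`-module `Q`. -/
noncomputable def indRel₀ (sA : SuperAlg O A) (Q : Type) [AddCommGroup Q] [Module O Q]
    [Module ↥sA.evenPart Q] [IsScalarTower O ↥sA.evenPart Q] : Submodule O (A ⊗[O] Q) :=
  Submodule.span O {z | ∃ (a : A) (b : ↥sA.evenPart) (q : Q),
    z = (a * ↑b) ⊗ₜ[O] q - a ⊗ₜ[O] (b • q)}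

open TensorProduct in
/-- A witness that the supermodule `P` is isomorphic, as a supermodule, to the induction
`Ind_{A₀}^A Q` of a projective `A₀`-module `Q` (with `Q` placed in even degree, so that the
grading on the induced module is `|a ⊗ q| = |a|`). -/
structure IndOfProjective (sA : SuperAlg O A) (P : Type) [AddCommGroup P] [Module O P]
    [Module A P] [IsScalarTower O A P] (sP : SuperMod sA P) where
  Q : Type
  [iQ1 : AddCommGroup Q]
  [iQ2 : Module O Q]
  [iQ3 : Module ↥sA.evenPart Q]
  [iQ4 : IsScalarTower O ↥sA.evenPart Q]
  proj : Module.Projective ↥sA.evenPart Q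
  φ : ((A ⊗[O] Q) ⧸ indRel₀ sA Q) →ₗ[O] P
  bij : Function.Bijective φ
  equivar : ∀ (a' a : A) (q : Q),
    φ (Submodule.Quotient.mk ((a' * a) ⊗ₜ[O] q)) =
      a' • φ (Submodule.Quotient.mk (a ⊗ₜ[O] q))
  isEven : ∀ (a : A) (q : Q),
    φ (Submodule.Quotient.mk ((sA.σ a) ⊗ₜ[O] q)) =
      sP.σ (φ (Submodule.Quotient.mk (a ⊗ₜ[O] q)))

end Projectivity


set_option synthInstance.maxHeartbeats 1000000
set_option maxHeartbeats 2000000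
set_option linter.unusedSectionVars false

namespace Sup9
variable {O : Type} [CommRing O] [Invertible (2 : O)] {A : Type} [Ring A] [Algebra O A]
variable {sA : SuperAlg O A}
variable {M : Type} [AddCommGroup M] [Module O M] [Module A M] [IsScalarTower O A M]

lemma halfAdd (x : M) : (⅟(2 : O)) • (x + x) = x := by
  rw [← two_smul O x, smul_smul, invOf_mul_self, one_smul]

include O in
lemma zeroOfAdd (x : M) (h : x + x = 0) : x = 0 := by
  have := halfAdd (O := O) (M := M) x
  rw [h, smul_zero] at this; exact this.symm

variable {P : Type} [AddCommGroup P] [Module O P] [Module A P] [IsScalarTower O A P]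

/-- conjugate of an `A`-linear map by the sign involutions. -/
def conjMap (sM : SuperMod sA M) (sP : SuperMod sA P) (h : P →ₗ[A] M) : P →ₗ[A] M where
  toFun x := sM.σ (h (sP.σ x))
  map_add' x y := by simp
  map_smul' a x := by
    simp only [RingHom.id_apply]
    rw [sP.compat, map_smul, sM.compat, sA.invol]

/-- symmetrization of an `A`-linear map. -/
def symMap (sM : SuperMod sA M) (sP : SuperMod sA P) (h : P →ₗ[A] M) : P →ₗ[A] M where
  toFun x := (⅟(2 : O)) • (h x + sM.σ (h (sP.σ x)))
  map_add' x y := by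
    simp only [map_add, smul_add]
    abel
  map_smul' a x := by
    simp only [RingHom.id_apply]
    rw [sP.compat, map_smul, map_smul, sM.compat, sA.invol, ← smul_add, smul_comm]

lemma symMap_even (sM : SuperMod sA M) (sP : SuperMod sA P) (h : P →ₗ[A] M) (x : P) :
    symMap sM sP h (sP.σ x) = sM.σ (symMap sM sP h x) := by
  show (⅟(2:O)) • (h (sP.σ x) + sM.σ (h (sP.σ (sP.σ x)))) = sM.σ ((⅟(2:O)) • (h x + sM.σ (h (sP.σ x))))
  rw [sP.invol, map_smul, map_add, sM.invol, add_comm]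

lemma symMap_lift {N : Type} [AddCommGroup N] [Module O N] [Module A N] [IsScalarTower O A N]
    (sM : SuperMod sA M) (sP : SuperMod sA P) (sN : SuperMod sA N)
    (f : M →ₗ[A] N) (hfσ : ∀ m, f (sM.σ m) = sN.σ (f m))
    (g : P →ₗ[A] N) (hgσ : ∀ x, g (sP.σ x) = sN.σ (g x))
    (h : P →ₗ[A] M) (hh : ∀ x, f (h x) = g x) (x : P) :
    f (symMap sM sP h x) = g x := by
  show f ((⅟(2:O)) • (h x + sM.σ (h (sP.σ x)))) = g x
  rw [LinearMap.map_smul_of_tower, map_add, hh, hfσ, hh, hgσ, sN.invol, halfAdd]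

theorem superProj_of_proj (sP : SuperMod sA P) (hP : Module.Projective A P) :
    IsProjSuperMod sA sP := by
  intro M _ _ _ _ sM N _ _ _ _ sN f hf hfσ g hgσ
  obtain ⟨h, hh⟩ := Module.projective_lifting_property f g hf
  exact ⟨symMap sM sP h, symMap_even sM sP h,
    symMap_lift sM sP sN f hfσ g hgσ h (fun x => by rw [← hh]; rfl)⟩

section EvenOdd
variable (sP : SuperMod sA P)

/-- even part of an element. -/
def pplus (p : P) : P := (⅟(2 : O)) • (p + sP.σ p)
/-- odd part of an element. -/
def pminus (p : P) : P := (⅟(2 : O)) • (p - sP.σ p)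

lemma σ_pplus (p : P) : sP.σ (pplus sP p) = pplus sP p := by
  simp only [pplus, map_smul, map_add, sP.invol, add_comm]

lemma σ_pminus (p : P) : sP.σ (pminus sP p) = -pminus sP p := by
  simp only [pminus, map_smul, map_sub, sP.invol, ← smul_neg, neg_sub]

lemma pplus_add_pminus (p : P) : pplus sP p + pminus sP p = p := by
  simp only [pplus, pminus, ← smul_add]
  rw [show p + sP.σ p + (p - sP.σ p) = p + p by abel, halfAdd]

end EvenOdd

section Free
variable (sP : SuperMod sA P)
variable (A P) in
/-- The rank-2 free supermodule on the index type `P`. -/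
abbrev FreeSM : Type := (P →₀ A) × (P →₀ A)

variable (sA P) in
/-- sign automorphism of the free supermodule. -/
noncomputable def σFree : FreeSM A P ≃ₗ[O] FreeSM A P :=
  (Finsupp.mapRange.linearEquiv sA.σ.toLinearEquiv).prodCongr
    ((Finsupp.mapRange.linearEquiv sA.σ.toLinearEquiv).trans (LinearEquiv.neg O))

variable (sA P) in
/-- supermodule structure of the free supermodule. -/
noncomputable def sFree : SuperMod sA (FreeSM A P) where
  σ := σFree sA P
  invol := by
    rintro ⟨g, h⟩
    simp only [σFree, LinearEquiv.prodCongr_apply, LinearEquiv.trans_apply, LinearEquiv.neg_apply,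
      map_neg, neg_neg]
    refine Prod.ext ?_ ?_ <;> ext p <;>
      simp [Finsupp.mapRange.linearEquiv_apply, Finsupp.mapRange_apply, sA.invol]
  compat := by
    rintro a ⟨g, h⟩
    simp only [σFree, Prod.smul_mk, LinearEquiv.prodCongr_apply, LinearEquiv.trans_apply,
      LinearEquiv.neg_apply, Prod.mk.injEq]
    refine ⟨?_, ?_⟩ <;> ext p <;>
      simp [Finsupp.mapRange.linearEquiv_apply, Finsupp.mapRange_apply, smul_eq_mul, map_mul,
        mul_neg]

/-- evaluation map from the free supermodule. -/
noncomputable def evalFree : FreeSM A P →ₗ[A] P :=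
  (Finsupp.linearCombination A (pplus sP)).coprod (Finsupp.linearCombination A (pminus sP))

lemma evalFree_surjective : Function.Surjective (evalFree sP) := by
  intro p
  refine ⟨(Finsupp.single p 1, Finsupp.single p 1), ?_⟩
  simp [evalFree, pplus_add_pminus]

lemma evalFree_even (x : FreeSM A P) :
    evalFree sP ((sFree sA P).σ x) = sP.σ (evalFree sP x) := by
  obtain ⟨g, h⟩ := x
  have h1 : ∀ g : P →₀ A, evalFree sP ((sFree sA P).σ (g, 0)) = sP.σ (evalFree sP (g, 0)) := by
    intro g
    induction g using Finsupp.induction_linear with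
    | zero => simp [sFree, σFree, evalFree]
    | add f₁ f₂ hf₁ hf₂ =>
      have : ((f₁ + f₂ : P →₀ A), (0 : P →₀ A)) = (f₁, 0) + (f₂, 0) := by simp
      rw [this, map_add, map_add, map_add, hf₁, hf₂, map_add]
    | single p a =>
      simp only [sFree, σFree, LinearEquiv.prodCongr_apply, Finsupp.mapRange.linearEquiv_apply,
        Finsupp.mapRange_single, map_zero, evalFree, LinearMap.coprod_apply,
        Finsupp.linearCombination_single, AlgEquiv.toLinearEquiv_apply]
      simp [Finsupp.mapRange.linearMap_apply, Finsupp.mapRange_single, sP.compat, σ_pplus]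
  have h2 : ∀ h : P →₀ A, evalFree sP ((sFree sA P).σ (0, h)) = sP.σ (evalFree sP (0, h)) := by
    intro h
    induction h using Finsupp.induction_linear with
    | zero => simp [sFree, σFree, evalFree]
    | add f₁ f₂ hf₁ hf₂ =>
      have : ((0 : P →₀ A), (f₁ + f₂ : P →₀ A)) = (0, f₁) + (0, f₂) := by simp
      rw [this, map_add, map_add, map_add, hf₁, hf₂, map_add]
    | single p a =>
      simp only [sFree, σFree, LinearEquiv.prodCongr_apply, Finsupp.mapRange.linearEquiv_apply,
        Finsupp.mapRange_single, map_zero, evalFree, LinearMap.coprod_apply,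
        Finsupp.linearCombination_single, AlgEquiv.toLinearEquiv_apply, LinearEquiv.trans_apply,
        LinearEquiv.neg_apply]
      simp [Finsupp.mapRange.linearMap_apply, Finsupp.mapRange_single, sP.compat, σ_pminus]
  have : (g, h) = ((g, 0) : FreeSM A P) + (0, h) := by simp
  rw [this, map_add, map_add, h1, h2, map_add, map_add]

theorem proj_of_superProj (sP : SuperMod sA P) (hP : IsProjSuperMod sA sP) :
    Module.Projective A P := by
  obtain ⟨h, -, hsect⟩ := hP (FreeSM A P) (sFree sA P) P sP (evalFree sP)
    (evalFree_surjective sP) (evalFree_even sP) LinearMap.id (fun x => rfl)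
  exact Module.Projective.of_split h (evalFree sP) (LinearMap.ext hsect)

end Free

section Unit

/-- `A` as a supermodule over itself. -/
noncomputable def sAmod (sA : SuperAlg O A) : SuperMod sA A where
  σ := sA.σ.toLinearEquiv
  invol := sA.invol
  compat a m := by simp [smul_eq_mul, map_mul]

variable {u : A} (hu : sA.IsSuperUnit u)

/-- the inverse of the superunit. -/
noncomputable def sinv : A := ↑hu.1.unit⁻¹

lemma mul_sinv : u * sinv hu = 1 := by
  simp [sinv, IsUnit.mul_val_inv]

lemma sinv_mul : sinv hu * u = 1 := by
  simp [sinv, IsUnit.val_inv_mul]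

lemma σ_sinv : sA.σ (sinv hu) = -(sinv hu) := by
  have h := congrArg sA.σ (mul_sinv hu)
  rw [map_mul, map_one, hu.2, neg_mul] at h
  have h2 : u * sA.σ (sinv hu) = -1 := neg_eq_iff_eq_neg.mp h
  have := congrArg (fun x => sinv hu * x) h2
  simpa [← mul_assoc, sinv_mul hu, mul_neg] using this

lemma smul_evenPart (b : ↥sA.evenPart) (p : P) : b • p = (↑b : A) • p := rfl

lemma σ_coe (b : ↥sA.evenPart) : sA.σ ↑b = (↑b : A) := b.2

/-- decomposition `A ≅ A₀ ⊕ A₀·u` as left `A₀`-modules. -/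
noncomputable def decompMap : (↥sA.evenPart × ↥sA.evenPart) →ₗ[↥sA.evenPart] A where
  toFun bc := ↑bc.1 + ↑bc.2 * u
  map_add' x y := by
    show ↑(x.1 + y.1) + ↑(x.2 + y.2) * u = _
    push_cast
    rw [add_mul]; abel
  map_smul' d bc := by
    simp only [Prod.smul_fst, Prod.smul_snd, smul_eq_mul, RingHom.id_apply]
    show ↑(d * bc.1) + ↑(d * bc.2) * u = (↑d : A) * _
    push_cast
    rw [mul_add, mul_assoc]

include hu in
lemma decompMap_bijective : Function.Bijective (decompMap (sA := sA) (u := u)) := by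
  constructor
  · rw [injective_iff_map_eq_zero]
    rintro ⟨b, c⟩ h
    simp only [decompMap, LinearMap.coe_mk, AddHom.coe_mk] at h
    have h2 := congrArg sA.σ h
    rw [map_add, map_mul, σ_coe, σ_coe, hu.2, map_zero, mul_neg] at h2
    have hb : (↑b : A) + ↑b = 0 := by
      have := congrArg₂ (· + ·) h h2
      simpa [add_add_add_comm] using this
    have hb0 : (↑b : A) = 0 := zeroOfAdd (O := O) _ hb
    have hc : (↑c : A) * u = 0 := by rw [hb0, zero_add] at h; exact h
    have hc0 : (↑c : A) = 0 := by
      have := congrArg (· * sinv hu) hc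
      simpa [mul_assoc, mul_sinv hu] using this
    simp [Prod.ext_iff, Subtype.ext_iff, hb0, hc0]
  · intro a
    refine ⟨(⟨pplus (sAmod sA) a, σ_pplus (sAmod sA) a⟩,
      ⟨pminus (sAmod sA) a * sinv hu, ?_⟩), ?_⟩
    · show sA.σ _ = _
      rw [map_mul, σ_sinv hu]
      have : sA.σ (pminus (sAmod sA) a) = -(pminus (sAmod sA) a) := σ_pminus (sAmod sA) a
      rw [this, neg_mul_neg]
    · show pplus (sAmod sA) a + pminus (sAmod sA) a * sinv hu * u = a
      rw [mul_assoc, sinv_mul hu, mul_one, pplus_add_pminus]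

include hu in
/-- `A` is free over its even part, when a superunit exists. -/
lemma free_over_even : Module.Free ↥sA.evenPart A :=
  Module.Free.of_equiv (LinearEquiv.ofBijective _ (decompMap_bijective (O := O) hu))

/-- the `A₀`-linear projection of a supermodule onto its even part. -/
noncomputable def evenRetract (sP : SuperMod sA P) : P →ₗ[↥sA.evenPart] ↥sP.evenSub where
  toFun p := ⟨pplus sP p, σ_pplus sP p⟩
  map_add' x y := by
    apply Subtype.ext
    show pplus sP (x + y) = pplus sP x + pplus sP y
    simp only [pplus, map_add, smul_add]; abel
  map_smul' b p := by
    apply Subtype.ext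
    show pplus sP ((↑b : A) • p) = (↑b : A) • pplus sP p
    simp only [pplus, sP.compat, σ_coe, ← smul_add, smul_comm ((⅟(2:O))) ((↑b : A))]

include hu in
theorem evenProj_of_proj (sP : SuperMod sA P) (hP : Module.Projective A P) :
    Module.Projective ↥sA.evenPart ↥sP.evenSub := by
  haveI : Module.Free ↥sA.evenPart A := free_over_even (O := O) hu
  obtain ⟨s, hs⟩ := Module.projective_def'.mp hP
  haveI hAP : Module.Projective ↥sA.evenPart P :=
    Module.Projective.of_split (s.restrictScalars ↥sA.evenPart)
      ((Finsupp.linearCombination A id).restrictScalars ↥sA.evenPart)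
      (by ext p; exact DFunLike.congr_fun hs p)
  exact Module.Projective.of_split (sP.evenSub.subtype) (evenRetract sP)
    (by
      ext x
      show pplus sP ↑x = ↑x
      have hx : sP.σ ↑x = ↑x := x.2
      rw [pplus, hx, halfAdd])

end Unit

section Ind
open TensorProduct
variable (sP : SuperMod sA P) {u : A} (hu : sA.IsSuperUnit u)

lemma sAmod_σ (a : A) : (sAmod sA).σ a = sA.σ a := rfl

variable (sA) in
/-- even-projection of `A`, as a linear map. -/
noncomputable def pplusL : A →ₗ[O] A where
  toFun a := pplus (sAmod sA) a
  map_add' x y := by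
    simp only [pplus, sAmod_σ, map_add]
    rw [show x + y + (sA.σ x + sA.σ y) = (x + sA.σ x) + (y + sA.σ y) by abel, smul_add]
  map_smul' o a := by
    simp only [pplus, sAmod_σ, map_smul, RingHom.id_apply, ← smul_add]
    rw [smul_comm]

lemma pplusL_mem (a : A) : pplusL sA a ∈ sA.evenPart := σ_pplus (sAmod sA) a

variable (sA) in
/-- odd-projection of `A`, as a linear map. -/
noncomputable def pminusL : A →ₗ[O] A where
  toFun a := pminus (sAmod sA) a
  map_add' x y := by
    simp only [pminus, sAmod_σ, map_add]
    rw [show x + y - (sA.σ x + sA.σ y) = (x - sA.σ x) + (y - sA.σ y) by abel, smul_add]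
  map_smul' o a := by
    simp only [pminus, sAmod_σ, map_smul, RingHom.id_apply, ← smul_sub]
    rw [smul_comm]

/-- the odd coordinate map `a ↦ u⁻¹ · (odd part of a)`. -/
noncomputable def oddL : A →ₗ[O] A := LinearMap.mulLeft O (sinv hu) ∘ₗ pminusL sA

lemma oddL_apply (a : A) : oddL hu a = sinv hu * pminus (sAmod sA) a := rfl

include hu in
lemma oddL_mem (a : A) : oddL hu a ∈ sA.evenPart := by
  show sA.σ _ = _
  rw [oddL_apply, map_mul, σ_sinv hu, show sA.σ (pminus (sAmod sA) a) = -(pminus (sAmod sA) a)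
    from σ_pminus (sAmod sA) a, neg_mul_neg]

include hu in
lemma decompA (a : A) : pplusL sA a + u * oddL hu a = a := by
  show pplus (sAmod sA) a + u * (sinv hu * pminus (sAmod sA) a) = a
  rw [← mul_assoc, mul_sinv hu, one_mul, pplus_add_pminus]

lemma pplusL_mul_even (a : A) (b : ↥sA.evenPart) : pplusL sA (a * ↑b) = pplusL sA a * ↑b := by
  show pplus (sAmod sA) (a * ↑b) = pplus (sAmod sA) a * ↑b
  simp only [pplus, sAmod_σ, map_mul, σ_coe, smul_mul_assoc, add_mul]

lemma oddL_mul_even (a : A) (b : ↥sA.evenPart) : oddL hu (a * ↑b) = oddL hu a * ↑b := by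
  rw [oddL_apply, oddL_apply]
  have : pminus (sAmod sA) (a * ↑b) = pminus (sAmod sA) a * ↑b := by
    simp only [pminus, sAmod_σ, map_mul, σ_coe, smul_mul_assoc, sub_mul]
  rw [this, mul_assoc]

variable (Q : Type) [AddCommGroup Q] [Module O Q] [Module ↥sA.evenPart Q]
  [IsScalarTower O ↥sA.evenPart Q]

lemma osmul_comm (b : ↥sA.evenPart) (o : O) (q : Q) : b • (o • q) = o • (b • q) := by
  rw [← algebraMap_smul (↥sA.evenPart) o q, ← mul_smul, ← Algebra.commutes o b, mul_smul,
    algebraMap_smul]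

variable (sA) in
/-- even coordinate of `A` valued in the even part. -/
noncomputable def bPlus : A →ₗ[O] ↥sA.evenPart where
  toFun a := ⟨pplusL sA a, pplusL_mem a⟩
  map_add' x y := by apply Subtype.ext; simp
  map_smul' o a := by apply Subtype.ext; simp [Subalgebra.coe_smul]

/-- odd coordinate of `A` valued in the even part. -/
noncomputable def bOdd : A →ₗ[O] ↥sA.evenPart where
  toFun a := ⟨oddL hu a, oddL_mem hu a⟩
  map_add' x y := by apply Subtype.ext; simp
  map_smul' o a := by apply Subtype.ext; simp [Subalgebra.coe_smul]

/-- the coordinatization bilinear map. -/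
noncomputable def psiBil : A →ₗ[O] Q →ₗ[O] (Q × Q) :=
  LinearMap.mk₂ O (fun a q => (bPlus sA a • q, bOdd hu a • q))
    (fun a a' q => by
      show ((bPlus sA (a + a')) • q, (bOdd hu (a + a')) • q) = _
      rw [map_add, map_add, add_smul, add_smul]; rfl)
    (fun o a q => by
      show ((bPlus sA (o • a)) • q, (bOdd hu (o • a)) • q) = _
      rw [map_smul, map_smul, smul_assoc, smul_assoc]; rfl)
    (fun a q q' => by
      show ((bPlus sA a) • (q + q'), (bOdd hu a) • (q + q')) = _
      rw [smul_add, smul_add]; rfl)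
    (fun o a q => by
      show ((bPlus sA a) • (o • q), (bOdd hu a) • (o • q)) = _
      rw [osmul_comm, osmul_comm]; rfl)

/-- the coordinatization map on the tensor product. -/
noncomputable def psiMap : A ⊗[O] Q →ₗ[O] (Q × Q) := TensorProduct.lift (psiBil hu Q)

lemma psiMap_tmul (a : A) (q : Q) :
    psiMap hu Q (a ⊗ₜ[O] q) = (bPlus sA a • q, bOdd hu a • q) := rfl

/-- the normal form map. -/
noncomputable def nfMap : A ⊗[O] Q →ₗ[O] A ⊗[O] Q :=
  (LinearMap.coprod ((TensorProduct.mk O A Q) 1) ((TensorProduct.mk O A Q) u)) ∘ₗ psiMap hu Q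

lemma nfMap_tmul (a : A) (q : Q) :
    nfMap hu Q (a ⊗ₜ[O] q) = 1 ⊗ₜ[O] (bPlus sA a • q) + u ⊗ₜ[O] (bOdd hu a • q) := rfl

lemma mk_rel (a : A) (b : ↥sA.evenPart) (q : Q) :
    (Submodule.Quotient.mk ((a * ↑b) ⊗ₜ[O] q) :
      (A ⊗[O] Q) ⧸ indRel₀ sA Q) = Submodule.Quotient.mk (a ⊗ₜ[O] (b • q)) := by
  rw [Submodule.Quotient.eq]
  exact Submodule.subset_span ⟨a, b, q, rfl⟩

lemma mk_nfMap (z : A ⊗[O] Q) :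
    (Submodule.Quotient.mk (nfMap hu Q z) : (A ⊗[O] Q) ⧸ indRel₀ sA Q) =
      Submodule.Quotient.mk z := by
  have key : (indRel₀ sA Q).mkQ ∘ₗ nfMap hu Q = (indRel₀ sA Q).mkQ := by
    apply TensorProduct.ext'
    intro a q
    simp only [LinearMap.comp_apply, nfMap_tmul, map_add, Submodule.mkQ_apply]
    have h1 : (Submodule.Quotient.mk ((1 : A) ⊗ₜ[O] (bPlus sA a • q)) :
        (A ⊗[O] Q) ⧸ indRel₀ sA Q) = Submodule.Quotient.mk ((pplusL sA a) ⊗ₜ[O] q) := by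
      rw [← mk_rel, one_mul]
      rfl
    have h2 : (Submodule.Quotient.mk ((u : A) ⊗ₜ[O] (bOdd hu a • q)) :
        (A ⊗[O] Q) ⧸ indRel₀ sA Q) = Submodule.Quotient.mk ((u * oddL hu a) ⊗ₜ[O] q) := by
      rw [← mk_rel]
      rfl
    rw [h1, h2, ← Submodule.Quotient.mk_add, ← add_tmul, decompA hu]
  exact DFunLike.congr_fun key z

section WithJ
variable (j : Q →ₗ[O] P)

/-- the multiplication bilinear map. -/
noncomputable def muBil : A →ₗ[O] Q →ₗ[O] P :=
  LinearMap.mk₂ O (fun a q => a • j q)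
    (fun a a' q => add_smul _ _ _)
    (fun o a q => smul_assoc _ _ _)
    (fun a q q' => by show a • j (q + q') = _; rw [map_add, smul_add])
    (fun o a q => by show a • j (o • q) = _; rw [map_smul, smul_comm])

/-- the multiplication map on the tensor product. -/
noncomputable def muMap : A ⊗[O] Q →ₗ[O] P := TensorProduct.lift (muBil Q j)

lemma muMap_tmul (a : A) (q : Q) : muMap Q j (a ⊗ₜ[O] q) = a • j q := rfl

variable (hjs : ∀ (b : ↥sA.evenPart) (q : Q), j (b • q) = (↑b : A) • j q)

include hjs in
lemma muMap_rel : indRel₀ sA Q ≤ LinearMap.ker (muMap Q j) := by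
  rw [indRel₀, Submodule.span_le]
  rintro z ⟨a, b, q, rfl⟩
  simp only [SetLike.mem_coe, LinearMap.mem_ker, map_sub, muMap_tmul]
  rw [hjs, mul_smul, sub_self]

/-- the induced map on the quotient. -/
noncomputable def phiMap : ((A ⊗[O] Q) ⧸ indRel₀ sA Q) →ₗ[O] P :=
  Submodule.liftQ _ (muMap Q j) (muMap_rel Q j hjs)

lemma phiMap_mk (a : A) (q : Q) :
    phiMap Q j hjs (Submodule.Quotient.mk (a ⊗ₜ[O] q)) = a • j q := by
  rw [phiMap, Submodule.liftQ_apply, muMap_tmul]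

lemma phiMap_equivar (a' a : A) (q : Q) :
    phiMap Q j hjs (Submodule.Quotient.mk ((a' * a) ⊗ₜ[O] q)) =
      a' • phiMap Q j hjs (Submodule.Quotient.mk (a ⊗ₜ[O] q)) := by
  rw [phiMap_mk, phiMap_mk, mul_smul]

variable (hje : ∀ q, sP.σ (j q) = j q)

include hje in
lemma phiMap_even (a : A) (q : Q) :
    phiMap Q j hjs (Submodule.Quotient.mk ((sA.σ a) ⊗ₜ[O] q)) =
      sP.σ (phiMap Q j hjs (Submodule.Quotient.mk (a ⊗ₜ[O] q))) := by
  rw [phiMap_mk, phiMap_mk, sP.compat, hje]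

include hje hu in
lemma phiMap_surjective (hjsurj : ∀ p : P, sP.σ p = p → ∃ q, j q = p) :
    Function.Surjective (phiMap Q j hjs) := by
  intro p
  obtain ⟨q1, hq1⟩ := hjsurj (pplus sP p) (σ_pplus sP p)
  obtain ⟨q2, hq2⟩ := hjsurj (sinv hu • pminus sP p) (by
    rw [sP.compat, σ_sinv hu, σ_pminus sP p, neg_smul, smul_neg, neg_neg])
  refine ⟨Submodule.Quotient.mk ((1 : A) ⊗ₜ[O] q1 + u ⊗ₜ[O] q2), ?_⟩
  rw [Submodule.Quotient.mk_add, map_add, phiMap_mk, phiMap_mk, hq1, hq2, one_smul,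
    ← mul_smul, mul_sinv hu, one_smul, pplus_add_pminus]

include hje hu in
lemma phiMap_injective (hjinj : Function.Injective j) :
    Function.Injective (phiMap Q j hjs) := by
  rw [injective_iff_map_eq_zero]
  intro x hx
  obtain ⟨z, rfl⟩ := Submodule.Quotient.mk_surjective _ x
  have hnf : phiMap Q j hjs (Submodule.Quotient.mk (nfMap hu Q z)) = 0 := by
    rw [mk_nfMap, hx]
  have hnf2 : nfMap hu Q z = 1 ⊗ₜ[O] (psiMap hu Q z).1 + u ⊗ₜ[O] (psiMap hu Q z).2 := by
    rw [nfMap]; rfl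
  rw [hnf2, Submodule.Quotient.mk_add, map_add, phiMap_mk, phiMap_mk, one_smul] at hnf
  set p1 := j (psiMap hu Q z).1 with hp1
  set p2 := j (psiMap hu Q z).2 with hp2
  have heven : sP.σ p1 = p1 := hje _
  have hodd : sP.σ (u • p2) = -(u • p2) := by rw [sP.compat, hu.2, hje, neg_smul]
  have hσ : p1 - u • p2 = 0 := by
    have := congrArg sP.σ hnf
    rwa [map_add, heven, hodd, map_zero, ← sub_eq_add_neg] at this
  have hp1z : p1 = 0 := by
    apply zeroOfAdd (O := O)
    have := congrArg₂ (· + ·) hnf hσ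
    simpa [add_add_add_comm] using this
  have hup2 : u • p2 = 0 := by rw [hp1z, zero_add] at hnf; exact hnf
  have hp2z : p2 = 0 := by
    have : sinv hu • u • p2 = p2 := by rw [← mul_smul, sinv_mul hu, one_smul]
    rw [← this, hup2, smul_zero]
  have h1 : (psiMap hu Q z).1 = 0 := hjinj (by rw [← hp1, hp1z, map_zero])
  have h2 : (psiMap hu Q z).2 = 0 := hjinj (by rw [← hp2, hp2z, map_zero])
  rw [← mk_nfMap hu Q z, hnf2, h1, h2, tmul_zero, tmul_zero, add_zero,
    Submodule.Quotient.mk_zero]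

/-- construction of the induced-module witness. -/
noncomputable def mkIndOfProjective (hQ : Module.Projective ↥sA.evenPart Q)
    (hjsurj : ∀ p : P, sP.σ p = p → ∃ q, j q = p) (hjinj : Function.Injective j) :
    IndOfProjective sA P sP where
  Q := Q
  proj := hQ
  φ := phiMap Q j hjs
  bij := ⟨phiMap_injective sP hu Q j hjs hje hjinj, phiMap_surjective sP hu Q j hjs hje hjsurj⟩
  equivar := phiMap_equivar Q j hjs
  isEven := phiMap_even sP Q j hjs hje

end WithJ

end Ind


section Even34
variable (sP : SuperMod sA P) {u : A} (hu : sA.IsSuperUnit u)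

/-- inclusion of the even part as an `O`-linear map. -/
noncomputable def jEven : ↥sP.evenSub →ₗ[O] P where
  toFun q := ↑q
  map_add' x y := rfl
  map_smul' o q := rfl

include hu in
theorem ind_of_evenProj (h3 : Module.Projective ↥sA.evenPart ↥sP.evenSub) :
    Nonempty (IndOfProjective sA P sP) := by
  refine ⟨mkIndOfProjective sP hu ↥sP.evenSub (jEven sP) (fun b q => rfl) (fun q => q.2) h3
    ?_ ?_⟩
  · intro p hp; exact ⟨⟨p, hp⟩, rfl⟩
  · exact fun x y hxy => Subtype.ext hxy

end Even34

section FourTwo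
open TensorProduct
variable (sP : SuperMod sA P)
variable (Q : Type) [AddCommGroup Q] [Module O Q] [Module ↥sA.evenPart Q]
  [IsScalarTower O ↥sA.evenPart Q]

variable (sA) in
/-- inclusion of coefficients `A₀ → A` on finitely supported functions. -/
noncomputable def iotaMap : (Q →₀ ↥sA.evenPart) →ₗ[O] (Q →₀ A) :=
  Finsupp.mapRange.linearMap (sA.evenPart.val.toLinearMap)

lemma iotaMap_single (q : Q) (b : ↥sA.evenPart) :
    iotaMap sA Q (Finsupp.single q b) = Finsupp.single q (↑b : A) := by
  simp [iotaMap]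

lemma iotaMap_smul_even (b : ↥sA.evenPart) (f : Q →₀ ↥sA.evenPart) :
    iotaMap sA Q (b • f) = (↑b : A) • iotaMap sA Q f := by
  ext q
  simp [iotaMap, Finsupp.mapRange_apply, smul_eq_mul]

variable (φ : ((A ⊗[O] Q) ⧸ indRel₀ sA Q) →ₗ[O] P)
variable (s : Q →ₗ[↥sA.evenPart] (Q →₀ ↥sA.evenPart))

/-- the evaluation map `(Q →₀ A) → P`, `f ↦ Σ f q • φ(1 ⊗ q)`. -/
noncomputable def TMap : (Q →₀ A) →ₗ[A] P :=
  Finsupp.linearCombination A (fun q => φ (Submodule.Quotient.mk ((1 : A) ⊗ₜ[O] q)))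

/-- the section bilinear map. -/
noncomputable def SBil : A →ₗ[O] Q →ₗ[O] (Q →₀ A) :=
  LinearMap.mk₂ O (fun a q => a • iotaMap sA Q (s q))
    (fun a a' q => add_smul _ _ _)
    (fun o a q => smul_assoc _ _ _)
    (fun a q q' => by show a • iotaMap sA Q (s (q + q')) = _; rw [map_add, map_add, smul_add])
    (fun o a q => by
      show a • iotaMap sA Q (s (o • q)) = o • (a • iotaMap sA Q (s q))
      rw [← algebraMap_smul (↥sA.evenPart) o q, map_smul, algebraMap_smul, map_smul,
        smul_comm])

/-- the section map on the tensor product. -/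
noncomputable def SMap : A ⊗[O] Q →ₗ[O] (Q →₀ A) := TensorProduct.lift (SBil Q s)

lemma SMap_tmul (a : A) (q : Q) : SMap Q s (a ⊗ₜ[O] q) = a • iotaMap sA Q (s q) := rfl

lemma SMap_rel : indRel₀ sA Q ≤ LinearMap.ker (SMap Q s) := by
  rw [indRel₀, Submodule.span_le]
  rintro z ⟨a, b, q, rfl⟩
  simp only [SetLike.mem_coe, LinearMap.mem_ker, map_sub, SMap_tmul]
  rw [map_smul, iotaMap_smul_even, ← mul_smul, sub_self]

/-- the section map on the quotient. -/
noncomputable def SBar : ((A ⊗[O] Q) ⧸ indRel₀ sA Q) →ₗ[O] (Q →₀ A) :=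
  Submodule.liftQ _ (SMap Q s) (SMap_rel Q s)

lemma SBar_mk (z : A ⊗[O] Q) : SBar Q s (Submodule.Quotient.mk z) = SMap Q s z := rfl

variable (hequivar : ∀ (a' a : A) (q : Q),
    φ (Submodule.Quotient.mk ((a' * a) ⊗ₜ[O] q)) =
      a' • φ (Submodule.Quotient.mk (a ⊗ₜ[O] q)))
variable (hs : ∀ q, Finsupp.linearCombination ↥sA.evenPart id (s q) = q)

include hequivar in
lemma TMap_iotaMap (f : Q →₀ ↥sA.evenPart) :
    TMap Q φ (iotaMap sA Q f) =
      φ (Submodule.Quotient.mk ((1 : A) ⊗ₜ[O] (Finsupp.linearCombination ↥sA.evenPart id f))) := by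
  induction f using Finsupp.induction_linear with
  | zero => simp [tmul_zero]
  | add f g hf hg =>
    rw [map_add, map_add, hf, hg, map_add, tmul_add, Submodule.Quotient.mk_add, map_add]
  | single q b =>
    rw [iotaMap_single, TMap, Finsupp.linearCombination_single, Finsupp.linearCombination_single,
      id, ← hequivar, mul_one, show ((↑b : A) ⊗ₜ[O] q) = (1 * ↑b) ⊗ₜ[O] q by rw [one_mul],
      mk_rel]

include hequivar hs in
lemma TMap_SBar (z : A ⊗[O] Q) :
    TMap Q φ (SBar Q s (Submodule.Quotient.mk z)) = φ (Submodule.Quotient.mk z) := by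
  induction z with
  | zero => simp
  | tmul a q =>
    rw [SBar_mk, SMap_tmul, map_smul, TMap_iotaMap Q φ hequivar, hs, ← hequivar, mul_one]
  | add z w hz hw =>
    rw [Submodule.Quotient.mk_add, map_add, map_add, hz, hw, ← map_add]

include hequivar in
lemma smul_phi (a' : A) (z : A ⊗[O] Q) :
    a' • φ (Submodule.Quotient.mk z) =
      φ (Submodule.Quotient.mk (LinearMap.rTensor Q (LinearMap.mulLeft O a') z)) := by
  induction z with
  | zero => simp
  | tmul a q => rw [LinearMap.rTensor_tmul, LinearMap.mulLeft_apply, hequivar]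
  | add z w hz hw =>
    rw [Submodule.Quotient.mk_add, map_add, smul_add, hz, hw, map_add,
      Submodule.Quotient.mk_add, map_add]

lemma SMap_rTensor (a' : A) (z : A ⊗[O] Q) :
    SMap Q s (LinearMap.rTensor Q (LinearMap.mulLeft O a') z) = a' • SMap Q s z := by
  induction z with
  | zero => simp
  | tmul a q => rw [LinearMap.rTensor_tmul, LinearMap.mulLeft_apply, SMap_tmul, SMap_tmul,
      mul_smul]
  | add z w hz hw => rw [map_add, map_add, map_add, hz, hw, smul_add]

theorem proj_of_ind (ind : IndOfProjective sA P sP) : Module.Projective A P := by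
  obtain ⟨Q, hproj, φ, hbij, hequivar, hiseven⟩ := ind
  obtain ⟨s, hs⟩ := Module.projective_def.mp hproj
  let e := LinearEquiv.ofBijective φ hbij
  have heφ : ∀ x, e x = φ x := fun x => rfl
  have hsymmφ : ∀ x, e.symm (φ x) = x := fun x => by rw [← heφ, e.symm_apply_apply]
  let S0 : P → (Q →₀ A) := fun p => SBar Q s (e.symm p)
  have hS0smul : ∀ (a' : A) (p : P), S0 (a' • p) = a' • S0 p := by
    intro a' p
    obtain ⟨z, hz⟩ := Submodule.Quotient.mk_surjective _ (e.symm p)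
    have hp : p = φ (Submodule.Quotient.mk z) := by rw [hz, ← heφ, e.apply_symm_apply]
    show SBar Q s (e.symm (a' • p)) = a' • SBar Q s (e.symm p)
    rw [hp, smul_phi Q φ hequivar a' z, hsymmφ, hsymmφ, SBar_mk, SBar_mk, SMap_rTensor]
  let S : P →ₗ[A] (Q →₀ A) :=
    { toFun := S0
      map_add' := fun p q => by simp only [S0, map_add]
      map_smul' := fun a p => hS0smul a p }
  have hTS : ∀ p, TMap Q φ (S p) = p := by
    intro p
    obtain ⟨z, hz⟩ := Submodule.Quotient.mk_surjective _ (e.symm p)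
    show TMap Q φ (SBar Q s (e.symm p)) = p
    rw [← hz, TMap_SBar Q φ s hequivar hs, hz, ← heφ, e.apply_symm_apply]
  exact Module.Projective.of_split S (TMap Q φ) (LinearMap.ext hTS)

end FourTwo

end Sup9


/-- Let `A` be a superalgebra with a superunit over a complete discrete
valuation ring `O` in which `2` is invertible, and `P` a finitely generated `A`-supermodule.
The following are equivalent: (i) `P` is a projective supermodule; (ii) `|P|` is a projective
`|A|`-module; (iii) the even part `P₀` is a projective `A₀`-module; (iv) `P` is isomorphic as
a supermodule to the induction of a projective `A₀`-module. -/
theorem projective_supermodule_tfae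
    (O : Type) [CommRing O] [IsDomain O] [IsDiscreteValuationRing O]
    [IsAdicComplete (IsLocalRing.maximalIdeal O) O] [Invertible (2 : O)]
    (A : Type) [Ring A] [Algebra O A] [Module.Finite O A] (sA : SuperAlg O A)
    (u : A) (hu : sA.IsSuperUnit u)
    (P : Type) [AddCommGroup P] [Module O P] [Module A P] [IsScalarTower O A P]
    [Module.Finite O P] (sP : SuperMod sA P) :
    List.TFAE
      [IsProjSuperMod sA sP,
       Module.Projective A P,
       Module.Projective ↥sA.evenPart ↥sP.evenSub,
       Nonempty (IndOfProjective sA P sP)] := by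
  tfae_have 1 → 2 := fun h => Sup9.proj_of_superProj sP h
  tfae_have 2 → 1 := fun h => Sup9.superProj_of_proj sP h
  tfae_have 2 → 3 := fun h => Sup9.evenProj_of_proj hu sP h
  tfae_have 3 → 4 := fun h => Sup9.ind_of_evenProj sP hu h
  tfae_have 4 → 2 := fun h => Sup9.proj_of_ind sP h.some
  tfae_finish
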